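/- The Harary graph H_{3,n} is distance magic if and only if n = 5. -/

import Mathlib

open scoped Classical
open Finset

/-- Weight of a vertex: sum of labels over its open neighborhood. -/
noncomputable def wsum {V : Type*} [Fintype V] (G : SimpleGraph V) (f : V → ℕ) (u : V) : ℕ :=
  ∑ v ∈ Finset.univ.filter (fun v => G.Adj u v), f v

/-- A graph is distance magic if some bijective labeling by 1,...,n has constant weights. -/
def IsDistanceMagic {V : Type*} [Fintype V] (G : SimpleGraph V) : Prop :=
  ∃ (f : V ≃ Fin (Fintype.card V)) (c : ℕ),
    ∀ u, wsum G (fun v => (f v : ℕ) + 1) u = c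

/-- `G` is `r`-regular. -/
def IsRegularDeg {V : Type*} [Fintype V] (G : SimpleGraph V) (r : ℕ) : Prop :=
  ∀ u : V, (Finset.univ.filter (fun v => G.Adj u v)).card = r

/-- `(a,d)`-distance antimagic: some bijective labeling by 1,...,n has weight set
`{a, a+d, ..., a+(n-1)d}`. -/
def IsDistAntimagic {V : Type*} [Fintype V] (G : SimpleGraph V) (a d : ℕ) : Prop :=
  ∃ f : V ≃ Fin (Fintype.card V),
    Finset.image (fun u => wsum G (fun v => (f v : ℕ) + 1) u) Finset.univ
      = Finset.image (fun i : Fin (Fintype.card V) => a + (i : ℕ) * d) Finset.univ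

/-- Circulant graph on `N` vertices with jumps `1,...,m` (so `H_{2m,N} = C_N^m`). -/
def circulant (N m : ℕ) : SimpleGraph (Fin N) :=
  SimpleGraph.fromRel (fun i j => ∃ k, 1 ≤ k ∧ k ≤ m ∧ ((i : ℕ) + k) % N = (j : ℕ))

/-- The graph `(K_{n-1} - M) + K_1`: vertex `0` joined to all, and vertices `1,...,n-1`
forming a complete graph minus the perfect matching pairing `i` with `i + (n-1)/2 (mod n-1)`. -/
def calG (n : ℕ) : SimpleGraph (Fin n) :=
  SimpleGraph.fromRel (fun i j =>
    (i : ℕ) = 0 ∨ (j : ℕ) = 0 ∨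
      ¬ (((i : ℕ) - 1 + (n - 1) / 2) % (n - 1) = (j : ℕ) - 1))

/-- Lexicographic product `G ∘ H`. -/
def lexProd {α β : Type*} (G : SimpleGraph α) (H : SimpleGraph β) : SimpleGraph (α × β) where
  Adj x y := G.Adj x.1 y.1 ∨ (x.1 = y.1 ∧ H.Adj x.2 y.2)
  symm := ⟨by
    rintro ⟨a, b⟩ ⟨c, d⟩ (h | ⟨h1, h2⟩)
    · exact Or.inl h.symm
    · exact Or.inr ⟨h1.symm, h2.symm⟩⟩
  loopless := ⟨by
    rintro ⟨a, b⟩ (h | ⟨-, h⟩)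
    · exact G.ne_of_adj h rfl
    · exact H.ne_of_adj h rfl⟩

/-- Direct (tensor) product `G × H`. -/
def tensorProd {α β : Type*} (G : SimpleGraph α) (H : SimpleGraph β) : SimpleGraph (α × β) where
  Adj x y := G.Adj x.1 y.1 ∧ H.Adj x.2 y.2
  symm := ⟨fun _ _ h => ⟨h.1.symm, h.2.symm⟩⟩
  loopless := ⟨fun x h => G.ne_of_adj h.1 rfl⟩

/-- The Harary graph `H_{3,n}`. -/
noncomputable def harary3 (n : ℕ) : SimpleGraph (Fin n) :=
  circulant n 1 ⊔ SimpleGraph.fromRel (fun i j =>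
    if n % 2 = 0 then
      ∃ k, 1 ≤ k ∧ k ≤ n / 2 ∧ (i : ℕ) = k ∧ (j : ℕ) = (k + n / 2) % n
    else
      ((i : ℕ) = 0 ∧ ((j : ℕ) = (n - 1) / 2 ∨ (j : ℕ) = (n + 1) / 2)) ∨
      (∃ k, 1 ≤ k ∧ k < (n - 1) / 2 ∧ (i : ℕ) = k ∧ (j : ℕ) = (k + (n + 1) / 2) % n))

/-- The Harary graph `H_{2n+1,2n+3}`: `C_{2n+3}^n` together with edges `v_0 v_{n+1}`,
`v_0 v_{n+2}` and `v_i v_{i+n+2}` for `1 ≤ i < n+1`. -/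
def hararyOdd (n : ℕ) : SimpleGraph (Fin (2 * n + 3)) :=
  circulant (2 * n + 3) n ⊔ SimpleGraph.fromRel (fun i j =>
    ((i : ℕ) = 0 ∧ ((j : ℕ) = n + 1 ∨ (j : ℕ) = n + 2)) ∨
    (∃ k, 1 ≤ k ∧ k < n + 1 ∧ (i : ℕ) = k ∧ (j : ℕ) = k + n + 2))

/-- The Harary graph `H_{4n+1,4n+4}`: circulant with jumps `1,...,2n` and `2n+2`. -/
def harary41 (n : ℕ) : SimpleGraph (Fin (4 * n + 4)) :=
  SimpleGraph.fromRel (fun i j =>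
    ∃ k, ((1 ≤ k ∧ k ≤ 2 * n) ∨ k = 2 * n + 2) ∧ ((i : ℕ) + k) % (4 * n + 4) = (j : ℕ))

/-- The join `G + K_1`. -/
def joinK1 {V : Type*} (G : SimpleGraph V) : SimpleGraph (V ⊕ Unit) :=
  SimpleGraph.fromRel (fun x y =>
    match x, y with
    | Sum.inl a, Sum.inl b => G.Adj a b
    | Sum.inl _, Sum.inr _ => True
    | Sum.inr _, _ => False)


/-! Distance magic labelings are bijections onto `{1, …, n}`, so the labels sum to `n(n+1)/2`.
Double counting the weights of an `r`-regular distance magic graph then forces its magic constant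
`c` to satisfy `2c = r(n+1)`; for `r = 3` this rules out every even `n`, where `H_{3,n}` is the
`3`-regular Möbius ladder. For odd `n = 2m+1` the vertices `v_m` and `v_{2m}` share the neighbours
`v_0` and `v_{m-1}`, so equal weights force equal labels on their remaining neighbours `v_{m+1}`
and `v_{2m-1}`, whence `m = 2`. Finally `H_{3,5}` carries the labeling `5, 1, 2, 4, 3`. -/

lemma Nat.mod_eq_iff_of_lt_two_mul {a b n : ℕ} (ha : a < 2 * n) (hb : b < n) :
    a % n = b ↔ a = b ∨ a = b + n := by
  rcases lt_or_ge a n with h | h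
  · rw [Nat.mod_eq_of_lt h]; omega
  · rw [Nat.mod_eq_sub_mod h, Nat.mod_eq_of_lt (by omega)]; omega

lemma Nat.eq_mod_iff_of_lt_two_mul {a b n : ℕ} (ha : a < 2 * n) (hb : b < n) :
    b = a % n ↔ a = b ∨ a = b + n := by
  rw [eq_comm, Nat.mod_eq_iff_of_lt_two_mul ha hb]

lemma exists_one_le_le_one_and {P : ℕ → Prop} : (∃ k, 1 ≤ k ∧ k ≤ 1 ∧ P k) ↔ P 1 := by
  simp only [← and_assoc, ← le_antisymm_iff, exists_eq_left']

lemma Fin.two_mul_sum_val_add_one (N : ℕ) : 2 * ∑ i : Fin N, ((i : ℕ) + 1) = N * (N + 1) := by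
  have h := Finset.sum_range_id_mul_two (N + 1)
  rw [Finset.sum_range_succ', Nat.add_sub_cancel] at h
  rw [Fin.sum_univ_eq_sum_range (· + 1)]
  linarith

section DistanceMagic

variable {V : Type*} [Fintype V] (G : SimpleGraph V)

lemma wsum_eq_sum_neighborFinset (f : V → ℕ) (u : V) :
    wsum G f u = ∑ v ∈ G.neighborFinset u, f v := by
  rw [wsum, SimpleGraph.neighborFinset_eq_filter]

lemma sum_wsum_eq_sum_degree_mul (f : V → ℕ) :
    ∑ u, wsum G f u = ∑ v, G.degree v * f v := by
  simp only [wsum, Finset.sum_filter]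
  rw [Finset.sum_comm]
  refine Finset.sum_congr rfl fun v _ => ?_
  rw [← Finset.sum_filter, Finset.sum_const, smul_eq_mul,
    ← SimpleGraph.card_neighborFinset_eq_degree, SimpleGraph.neighborFinset_eq_filter]
  simp only [G.adj_comm]

lemma two_mul_magic_const_of_isRegularOfDegree [Nonempty V] {r c : ℕ}
    (hreg : G.IsRegularOfDegree r) (f : V ≃ Fin (Fintype.card V))
    (hc : ∀ u, wsum G (fun v => (f v : ℕ) + 1) u = c) :
    2 * c = r * (Fintype.card V + 1) := by
  have hsum : Fintype.card V * c = r * ∑ i : Fin (Fintype.card V), ((i : ℕ) + 1) := by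
    calc Fintype.card V * c = ∑ u, wsum G (fun v => (f v : ℕ) + 1) u := by simp [hc]
      _ = ∑ v, r * ((f v : ℕ) + 1) := by
        rw [sum_wsum_eq_sum_degree_mul]; simp only [hreg.degree_eq]
      _ = r * ∑ i : Fin (Fintype.card V), ((i : ℕ) + 1) := by
        rw [← Finset.mul_sum, Equiv.sum_comp f (fun i => (i : ℕ) + 1)]
  apply Nat.eq_of_mul_eq_mul_left (Fintype.card_pos (α := V))
  calc Fintype.card V * (2 * c) = r * (2 * ∑ i : Fin (Fintype.card V), ((i : ℕ) + 1)) := by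
        rw [mul_left_comm, hsum]; ring
    _ = Fintype.card V * (r * (Fintype.card V + 1)) := by
        rw [Fin.two_mul_sum_val_add_one]; ring

lemma eq_of_wsum_eq_of_neighborFinset_eq_insert [DecidableEq V] {f : V → ℕ} (hf : f.Injective)
    {u w a b : V} {s : Finset V} (hu : G.neighborFinset u = insert a s)
    (hw : G.neighborFinset w = insert b s) (ha : a ∉ s) (hb : b ∉ s)
    (h : wsum G f u = wsum G f w) : a = b := by
  rw [wsum_eq_sum_neighborFinset, wsum_eq_sum_neighborFinset, hu, hw,
    Finset.sum_insert ha, Finset.sum_insert hb, Nat.add_right_cancel_iff] at h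
  exact hf h

end DistanceMagic

lemma harary3_even_adj_iff (m : ℕ) (hm : 1 ≤ m) (i j : Fin (2 * m)) :
    (harary3 (2 * m)).Adj i j ↔
      j = i + ⟨1, by omega⟩ ∨ j = i + ⟨2 * m - 1, by omega⟩ ∨ j = i + ⟨m, by omega⟩ := by
  have := i.isLt; have := j.isLt
  simp only [harary3, SimpleGraph.sup_adj, circulant, SimpleGraph.fromRel_adj,
    exists_one_le_le_one_and, Nat.mul_mod_right, if_true, Nat.mul_div_cancel_left m two_pos,
    Fin.ext_iff, Fin.val_add, ne_eq, and_left_comm (b := (_ : ℕ) = _), exists_eq_left']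
  simp (disch := omega) only [Nat.mod_eq_iff_of_lt_two_mul, Nat.eq_mod_iff_of_lt_two_mul]
  omega

lemma harary3_even_isRegularOfDegree (m : ℕ) (hm : 2 ≤ m) :
    (harary3 (2 * m)).IsRegularOfDegree 3 := by
  intro i
  have hne : ∀ (a b : ℕ) {ha : a < 2 * m} {hb : b < 2 * m}, a ≠ b → i + ⟨a, ha⟩ ≠ i + ⟨b, hb⟩ :=
    fun _ _ _ _ hab => (add_right_injective i).ne (Fin.ne_of_val_ne hab)
  rw [← SimpleGraph.card_neighborFinset_eq_degree, Finset.card_eq_three]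
  refine ⟨i + ⟨1, by omega⟩, i + ⟨2 * m - 1, by omega⟩, i + ⟨m, by omega⟩,
    hne 1 (2 * m - 1) (by omega), hne 1 m (by omega), hne (2 * m - 1) m (by omega), ?_⟩
  ext j
  simp only [SimpleGraph.mem_neighborFinset, harary3_even_adj_iff m (by omega), Finset.mem_insert,
    Finset.mem_singleton]

lemma harary3_even_not_isDistanceMagic (m : ℕ) (hm : 2 ≤ m) :
    ¬ IsDistanceMagic (harary3 (2 * m)) := by
  rintro ⟨f, c, hc⟩
  have : Nonempty (Fin (2 * m)) := ⟨⟨0, by omega⟩⟩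
  have h := two_mul_magic_const_of_isRegularOfDegree _ (harary3_even_isRegularOfDegree m hm) f hc
  rw [Fintype.card_fin] at h
  omega

lemma harary3_odd_adj_iff (m : ℕ) (i j : Fin (2 * m + 1)) : (harary3 (2 * m + 1)).Adj i j ↔
    i ≠ j ∧ (((i : ℕ) + 1 = j ∨ (i : ℕ) = j + 2 * m) ∨ ((j : ℕ) + 1 = i ∨ (j : ℕ) = i + 2 * m) ∨
      ((i : ℕ) = 0 ∧ ((j : ℕ) = m ∨ (j : ℕ) = m + 1) ∨
        1 ≤ (i : ℕ) ∧ (i : ℕ) < m ∧ (j : ℕ) = i + m + 1) ∨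
      ((j : ℕ) = 0 ∧ ((i : ℕ) = m ∨ (i : ℕ) = m + 1) ∨
        1 ≤ (j : ℕ) ∧ (j : ℕ) < m ∧ (i : ℕ) = j + m + 1)) := by
  have := i.isLt; have := j.isLt
  simp only [harary3, SimpleGraph.sup_adj, circulant, SimpleGraph.fromRel_adj,
    exists_one_le_le_one_and, if_neg (show ¬ (2 * m + 1) % 2 = 0 by omega), ne_eq,
    and_left_comm (b := (_ : ℕ) = _), exists_eq_left']
  simp (disch := omega) only [Nat.mod_eq_iff_of_lt_two_mul, Nat.eq_mod_iff_of_lt_two_mul]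
  omega

lemma harary3_odd_neighborFinset_mid (m : ℕ) (hm : 1 ≤ m) :
    (harary3 (2 * m + 1)).neighborFinset ⟨m, by omega⟩ =
      {⟨m + 1, by omega⟩, ⟨m - 1, by omega⟩, ⟨0, by omega⟩} := by
  ext v
  have := v.isLt
  simp only [SimpleGraph.mem_neighborFinset, harary3_odd_adj_iff, Finset.mem_insert,
    Finset.mem_singleton, Fin.ext_iff, ne_eq, true_or, and_true]
  omega

lemma harary3_odd_neighborFinset_last (m : ℕ) (hm : 1 ≤ m) :
    (harary3 (2 * m + 1)).neighborFinset ⟨2 * m, by omega⟩ =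
      {⟨2 * m - 1, by omega⟩, ⟨m - 1, by omega⟩, ⟨0, by omega⟩} := by
  ext v
  have := v.isLt
  simp only [SimpleGraph.mem_neighborFinset, harary3_odd_adj_iff, Finset.mem_insert,
    Finset.mem_singleton, Fin.ext_iff, ne_eq]
  omega

lemma eq_two_of_harary3_odd_isDistanceMagic (m : ℕ) (hm : 1 ≤ m)
    (h : IsDistanceMagic (harary3 (2 * m + 1))) : m = 2 := by
  obtain ⟨f, c, hc⟩ := h
  have hf : Function.Injective fun v => (f v : ℕ) + 1 := fun v w hvw =>
    f.injective (Fin.ext (by simpa using hvw))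
  have := eq_of_wsum_eq_of_neighborFinset_eq_insert _ hf (harary3_odd_neighborFinset_mid m hm)
    (harary3_odd_neighborFinset_last m hm)
    (by simp only [Finset.mem_insert, Finset.mem_singleton, Fin.ext_iff, not_or]; omega)
    (by simp only [Finset.mem_insert, Finset.mem_singleton, Fin.ext_iff, not_or]; omega)
    ((hc _).trans (hc _).symm)
  simp only [Fin.ext_iff] at this
  omega

lemma harary3_five_neighborFinset (u : Fin 5) : (harary3 5).neighborFinset u =
    (![{1, 2, 3, 4}, {0, 2, 4}, {0, 1, 3}, {0, 2, 4}, {0, 1, 3}] : Fin 5 → Finset (Fin 5)) u := by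
  ext v
  rw [SimpleGraph.mem_neighborFinset]
  refine (harary3_odd_adj_iff 2 u v).trans ?_
  fin_cases u <;> fin_cases v <;> simp

lemma harary3_five_isDistanceMagic : IsDistanceMagic (harary3 5) := by
  let f : Fin 5 ≃ Fin 5 := ⟨![4, 0, 1, 3, 2], ![1, 2, 4, 3, 0], by decide, by decide⟩
  refine ⟨f.trans (finCongr (Fintype.card_fin 5).symm), 10, fun u => ?_⟩
  rw [wsum_eq_sum_neighborFinset, harary3_five_neighborFinset]
  fin_cases u <;> decide

/-- H_{3,n} is distance magic iff n = 5. -/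
theorem harary3_distance_magic_iff (n : ℕ) (hn : 4 ≤ n) :
    IsDistanceMagic (harary3 n) ↔ n = 5 := by
  obtain ⟨m, rfl | rfl⟩ := Nat.even_or_odd' n
  · exact iff_of_false (harary3_even_not_isDistanceMagic m (by omega)) (by omega)
  · constructor
    · intro h
      have := eq_two_of_harary3_odd_isDistanceMagic m (by omega) h
      omega
    · intro h
      obtain rfl : m = 2 := by omega
      exact harary3_five_isDistanceMagic
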